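/- Extending Q and Φ by +∞ on (−∞,0), the Legendre transform of Φ is given for every λ ∈ ℝ by Φ*(λ) = ∫_{ℝ³} Q*(λ − (1/2)|v|²) dv; in particular Q*(λ) = 0 = Φ*(λ) for λ < 0. -/

import Mathlib

open MeasureTheory Real Filter Topology

noncomputable section

abbrev Space : Type := EuclideanSpace ℝ (Fin 3)
abbrev Phase : Type := Space × Space

/-- Spatial density induced by a phase-space density. -/
def rho (f : Phase → ℝ) : Space → ℝ := fun x => ∫ v : Space, f (x, v)

/-- Induced gravitational potential `U_ρ = -ρ ∗ 1/|·|`. -/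
def Upot (ρ : Space → ℝ) : Space → ℝ := fun x => - ∫ y : Space, ρ y / ‖x - y‖

/-- Kinetic energy. -/
def Ekin (f : Phase → ℝ) : ℝ := (1/2) * ∫ p : Phase, ‖p.2‖^2 * f p

/-- Casimir functional. -/
def Cas (Q : ℝ → ℝ) (f : Phase → ℝ) : ℝ := ∫ p : Phase, Q (f p)

/-- Potential energy. -/
def Epot (ρ : Space → ℝ) : ℝ :=
  -(1/2) * ∫ x : Space, ∫ y : Space, ρ x * ρ y / ‖x - y‖

/-- Energy-Casimir functional. -/
def HC (Q : ℝ → ℝ) (f : Phase → ℝ) : ℝ := Cas Q f + Ekin f + Epot (rho f)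

/-- The constraint set `F_M`. -/
def FM (Q : ℝ → ℝ) (M : ℝ) : Set (Phase → ℝ) :=
  {f | (∀ p, 0 ≤ f p) ∧ Integrable f ∧
       Integrable (fun p : Phase => Q (f p) + (1/2) * ‖p.2‖^2 * f p) ∧
       MemLp (rho f) (ENNReal.ofReal (6/5)) ∧
       (∫ p : Phase, f p) = M}

/-- `∫ ((1/2)|v|² g(v) + Q(g(v))) dv`. -/
def kinQint (Q : ℝ → ℝ) (g : Space → ℝ) : ℝ :=
  ∫ v : Space, ((1/2) * ‖v‖^2 * g v + Q (g v))

/-- The set `G_r`. -/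
def Gset (Q : ℝ → ℝ) (r : ℝ) : Set (Space → ℝ) :=
  {g | (∀ v, 0 ≤ g v) ∧ Integrable g ∧
       Integrable (fun v => (1/2) * ‖v‖^2 * g v + Q (g v)) ∧
       (∫ v : Space, g v) = r}

/-- The reduced integrand `Φ(r) = inf_{g ∈ G_r} ∫ ((1/2)|v|² g + Q(g))`. -/
def Phi (Q : ℝ → ℝ) (r : ℝ) : ℝ := sInf (kinQint Q '' Gset Q r)

/-- The reduced energy-Casimir functional. -/
def HCr (Q : ℝ → ℝ) (ρ : Space → ℝ) : ℝ := (∫ x : Space, Phi Q (ρ x)) + Epot ρ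

/-- Assumptions on `Q`: `Q ∈ C¹([0,∞))` with derivative `Q'`, strictly convex,
`Q(0) = Q'(0) = 0`, and `Q(f)/f → ∞` as `f → ∞`. -/
structure QHyp (Q Q' : ℝ → ℝ) : Prop where
  hasDeriv : ∀ r ∈ Set.Ici (0:ℝ), HasDerivWithinAt Q (Q' r) (Set.Ici 0) r
  contDeriv : ContinuousOn Q' (Set.Ici 0)
  strictConvex : StrictConvexOn ℝ (Set.Ici 0) Q
  zero : Q 0 = 0
  derivZero : Q' 0 = 0
  superlinear : Tendsto (fun f => Q f / f) atTop atTop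

/-- Legendre transform of a function extended by `+∞` off the set `s`:
`h*(λ) = sup_{r ∈ s} (λ r - h(r))`. -/
def legendre (h : ℝ → ℝ) (s : Set ℝ) (lam : ℝ) : ℝ :=
  sSup ((fun r => lam * r - h r) '' s)

/-! Integrating the pointwise Fenchel–Young inequality
`λ g - (|v|² g / 2 + Q(g)) ≤ Q*(λ - |v|²/2)` over any `g ∈ G_r` gives
`λ r - Φ(r) ≤ ∫ Q*(λ - |v|²/2) dv` for all `r ≥ 0`. Equality holds at `r = ∫ g₀`, where `g₀(v)`
maximizes `r ↦ (λ - |v|²/2) r - Q(r)`: taking the least maximizer makes `g₀` a monotone function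
of `λ - |v|²/2`, hence measurable, and it vanishes for `|v|² ≥ 2λ`, hence is integrable.
As `Q ≥ 0 = Q(0)`, `Q*` vanishes on `(-∞, 0]`, which gives the claim for `λ < 0`. -/

open MeasureTheory Set Filter

theorem integrable_comp_sub_half_norm_sq {E : Type*} [NormedAddCommGroup E] [MeasurableSpace E]
    [BorelSpace E] [ProperSpace E] {μ : Measure E} [IsFiniteMeasureOnCompacts μ] {F : ℝ → ℝ}
    (hF : Monotone F) (hF0 : ∀ s ≤ 0, F s = 0) (lam : ℝ) :
    Integrable (fun v => F (lam - 1 / 2 * ‖v‖ ^ 2)) μ := by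
  have hsupp : Function.support (fun v : E => F (lam - 1 / 2 * ‖v‖ ^ 2)) ⊆
      Metric.closedBall 0 (|lam| + 1) := by
    intro v hv
    by_contra hout
    rw [Metric.mem_closedBall, dist_zero_right, not_le] at hout
    refine hv (hF0 _ ?_)
    nlinarith [le_abs_self lam, abs_nonneg lam]
  have hmeas : Measurable fun v : E => F (lam - 1 / 2 * ‖v‖ ^ 2) :=
    hF.measurable.comp (by fun_prop)
  refine (integrableOn_iff_integrable_of_support_subset hsupp).1 <|
    Measure.integrableOn_of_bounded measure_closedBall_lt_top.ne hmeas.aestronglyMeasurable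
      (M := F lam) (ae_of_all _ fun v => ?_)
  have hnonneg : 0 ≤ F (lam - 1 / 2 * ‖v‖ ^ 2) :=
    (hF0 _ (min_le_right _ 0)).symm.le.trans (hF (min_le_left _ 0))
  rw [Real.norm_of_nonneg hnonneg]
  exact hF (by nlinarith [sq_nonneg ‖v‖])

section Legendre

variable {h : ℝ → ℝ}

theorem tendsto_mul_sub_atBot (hsup : Tendsto (fun r => h r / r) atTop atTop) (s : ℝ) :
    Tendsto (fun r => s * r - h r) atTop atBot := by
  have hfac : Tendsto (fun r => r * (s - h r / r)) atTop atBot :=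
    tendsto_id.atTop_mul_atBot₀
      (tendsto_atBot_add_const_left _ s (tendsto_neg_atTop_atBot.comp hsup))
  refine hfac.congr' ((eventually_gt_atTop 0).mono fun r hr => ?_)
  field_simp

theorem exists_isMaxOn_mul_sub (hc : ContinuousOn h (Ici 0))
    (hsup : Tendsto (fun r => h r / r) atTop atTop) (s : ℝ) :
    ∃ r₀ ∈ Ici (0 : ℝ), IsMaxOn (fun r => s * r - h r) (Ici 0) r₀ := by
  refine ((continuousOn_const.mul continuousOn_id).sub hc).exists_isMaxOn' isClosed_Ici
    self_mem_Ici ?_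
  rw [cocompact_eq_atBot_atTop, inf_sup_right, eventually_sup, eventually_inf_principal,
    eventually_inf_principal]
  exact ⟨(eventually_lt_atBot 0).mono fun r hr hr' => absurd hr' (not_le.2 hr),
    ((tendsto_mul_sub_atBot hsup s).eventually_le_atBot _).mono fun r hr _ => hr⟩

theorem le_legendre (hc : ContinuousOn h (Ici 0))
    (hsup : Tendsto (fun r => h r / r) atTop atTop) (s : ℝ) {r : ℝ} (hr : 0 ≤ r) :
    s * r - h r ≤ legendre h (Ici 0) s := by
  obtain ⟨_, -, hmax⟩ := exists_isMaxOn_mul_sub hc hsup s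
  exact le_csSup hmax.bddAbove (mem_image_of_mem _ hr)

theorem legendre_eq_of_isMaxOn {s r₀ : ℝ} (hr₀ : 0 ≤ r₀)
    (hmax : IsMaxOn (fun r => s * r - h r) (Ici 0) r₀) :
    legendre h (Ici 0) s = s * r₀ - h r₀ :=
  IsGreatest.csSup_eq ⟨mem_image_of_mem _ hr₀, forall_mem_image.2 hmax⟩

theorem legendre_mono (hc : ContinuousOn h (Ici 0))
    (hsup : Tendsto (fun r => h r / r) atTop atTop) : Monotone (legendre h (Ici 0)) := by
  intro s t hst
  refine csSup_le (nonempty_Ici.image _) (forall_mem_image.2 fun r (hr : 0 ≤ r) => ?_)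
  calc s * r - h r ≤ t * r - h r := by nlinarith
    _ ≤ legendre h (Ici 0) t := le_legendre hc hsup t hr

theorem legendre_eq_zero_of_nonpos (h0 : h 0 = 0) (hnonneg : ∀ r, 0 ≤ r → 0 ≤ h r) {s : ℝ}
    (hs : s ≤ 0) : legendre h (Ici 0) s = 0 := by
  refine legendre_eq_of_isMaxOn le_rfl (fun r (hr : 0 ≤ r) => ?_) |>.trans (by simp [h0])
  show s * r - h r ≤ s * 0 - h 0
  nlinarith [hnonneg r hr]

def legendreMaximizers (h : ℝ → ℝ) (s : ℝ) : Set ℝ :=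
  {r | 0 ≤ r ∧ s * r - h r = legendre h (Ici 0) s}

def legendreArgmax (h : ℝ → ℝ) (s : ℝ) : ℝ := sInf (legendreMaximizers h s)

theorem legendreArgmax_mem (hc : ContinuousOn h (Ici 0))
    (hsup : Tendsto (fun r => h r / r) atTop atTop) (s : ℝ) :
    legendreArgmax h s ∈ legendreMaximizers h s := by
  have hclosed : IsClosed (legendreMaximizers h s) :=
    ((continuousOn_const.mul continuousOn_id).sub hc).preimage_isClosed_of_isClosed
      isClosed_Ici isClosed_singleton
  obtain ⟨r₀, hr₀, hmax⟩ := exists_isMaxOn_mul_sub hc hsup s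
  have hne : (legendreMaximizers h s).Nonempty :=
    ⟨r₀, hr₀, (legendre_eq_of_isMaxOn hr₀ hmax).symm⟩
  exact hclosed.csInf_mem hne ⟨0, fun _ hr => hr.1⟩

theorem legendreArgmax_mono (hc : ContinuousOn h (Ici 0))
    (hsup : Tendsto (fun r => h r / r) atTop atTop) : Monotone (legendreArgmax h) := by
  intro s t hst
  obtain ⟨hs₀, hs⟩ := legendreArgmax_mem hc hsup s
  refine le_csInf ⟨_, legendreArgmax_mem hc hsup t⟩ fun b ⟨hb₀, hb⟩ => ?_
  have h₁ := hs ▸ le_legendre hc hsup s hb₀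
  have h₂ := hb ▸ le_legendre hc hsup t hs₀
  rcases hst.lt_or_eq with hlt | rfl
  · nlinarith
  · exact csInf_le ⟨0, fun _ hr => hr.1⟩ ⟨hb₀, hb⟩

theorem legendreArgmax_eq_zero_of_nonpos (hc : ContinuousOn h (Ici 0))
    (hsup : Tendsto (fun r => h r / r) atTop atTop) (h0 : h 0 = 0)
    (hnonneg : ∀ r, 0 ≤ r → 0 ≤ h r) {s : ℝ} (hs : s ≤ 0) : legendreArgmax h s = 0 := by
  have hzero : (0 : ℝ) ∈ legendreMaximizers h s :=
    ⟨le_rfl, by rw [legendre_eq_zero_of_nonpos h0 hnonneg hs, h0]; ring⟩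
  exact le_antisymm (csInf_le ⟨0, fun _ hr => hr.1⟩ hzero) (legendreArgmax_mem hc hsup s).1

end Legendre

namespace QHyp

variable {Q Q' : ℝ → ℝ}

theorem continuousOn (hQ : QHyp Q Q') : ContinuousOn Q (Ici 0) :=
  fun r hr => (hQ.hasDeriv r hr).continuousWithinAt

theorem nonneg (hQ : QHyp Q Q') {r : ℝ} (hr : 0 ≤ r) : 0 ≤ Q r := by
  rcases hr.eq_or_lt with rfl | hpos
  · exact hQ.zero.ge
  have hslope := hQ.strictConvex.convexOn.le_slope_of_hasDerivWithinAt self_mem_Ici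
    (mem_Ici.2 hr) hpos (hQ.hasDeriv 0 self_mem_Ici)
  rw [hQ.derivZero, slope_def_field, hQ.zero, sub_zero, sub_zero] at hslope
  simpa using (le_div_iff₀ hpos).1 hslope

theorem integrable_legendre (hQ : QHyp Q Q') (lam : ℝ) :
    Integrable fun v : Space => legendre Q (Ici 0) (lam - 1 / 2 * ‖v‖ ^ 2) :=
  integrable_comp_sub_half_norm_sq (legendre_mono hQ.continuousOn hQ.superlinear)
    (fun _ => legendre_eq_zero_of_nonpos hQ.zero fun _ => hQ.nonneg) lam

end QHyp

section Reduction

variable {Q Q' : ℝ → ℝ}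

theorem kinQint_nonneg (hQ : QHyp Q Q') {g : Space → ℝ} (hg : ∀ v, 0 ≤ g v) :
    0 ≤ kinQint Q g :=
  integral_nonneg fun v => add_nonneg (by have := hg v; positivity) (hQ.nonneg (hg v))

theorem Phi_le_kinQint (hQ : QHyp Q Q') {r : ℝ} {g : Space → ℝ} (hg : g ∈ Gset Q r) :
    Phi Q r ≤ kinQint Q g :=
  csInf_le ⟨0, forall_mem_image.2 fun _ hg' => kinQint_nonneg hQ hg'.1⟩ (mem_image_of_mem _ hg)

theorem Gset_nonempty (h0 : Q 0 = 0) {r : ℝ} (hr : 0 ≤ r) : (Gset Q r).Nonempty := by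
  set B := Metric.ball (0 : Space) 1
  have hvol : 0 < volume.real B :=
    ENNReal.toReal_pos (Metric.measure_ball_pos volume 0 one_pos).ne' measure_ball_lt_top.ne
  set c := r / volume.real B
  have hc : 0 ≤ c := div_nonneg hr hvol.le
  refine ⟨B.indicator fun _ => c, indicator_nonneg fun _ _ => hc,
    (integrableOn_const measure_ball_lt_top.ne).integrable_indicator measurableSet_ball, ?_, ?_⟩
  · have hind : (fun v => 1 / 2 * ‖v‖ ^ 2 * B.indicator (fun _ => c) v
        + Q (B.indicator (fun _ => c) v)) = B.indicator fun v => 1 / 2 * ‖v‖ ^ 2 * c + Q c := by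
      funext v
      by_cases hv : v ∈ B <;> simp [hv, h0]
    rw [hind]
    refine IntegrableOn.integrable_indicator ?_ measurableSet_ball
    exact ((Continuous.continuousOn (by fun_prop)).integrableOn_compact
      (isCompact_closedBall 0 1)).mono_set Metric.ball_subset_closedBall
  · rw [integral_indicator_const c measurableSet_ball, smul_eq_mul]
    exact mul_div_cancel₀ r hvol.ne'

theorem mul_sub_kinQint_le_integral_legendre (hQ : QHyp Q Q') (lam : ℝ) {r : ℝ}
    {g : Space → ℝ} (hg : g ∈ Gset Q r) :
    lam * r - kinQint Q g ≤ ∫ v : Space, legendre Q (Ici 0) (lam - 1 / 2 * ‖v‖ ^ 2) := by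
  obtain ⟨hg₀, hgint, hkint, rfl⟩ := hg
  rw [kinQint, ← integral_const_mul, ← integral_sub (hgint.const_mul lam) hkint]
  refine integral_mono ((hgint.const_mul lam).sub hkint) (hQ.integrable_legendre lam) fun v => ?_
  calc lam * g v - (1 / 2 * ‖v‖ ^ 2 * g v + Q (g v))
      = (lam - 1 / 2 * ‖v‖ ^ 2) * g v - Q (g v) := by ring
    _ ≤ _ := le_legendre hQ.continuousOn hQ.superlinear _ (hg₀ v)

theorem mul_sub_Phi_le_integral_legendre (hQ : QHyp Q Q') (lam : ℝ) {r : ℝ} (hr : 0 ≤ r) :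
    lam * r - Phi Q r ≤ ∫ v : Space, legendre Q (Ici 0) (lam - 1 / 2 * ‖v‖ ^ 2) := by
  have hPhi : lam * r - ∫ v : Space, legendre Q (Ici 0) (lam - 1 / 2 * ‖v‖ ^ 2) ≤ Phi Q r :=
    le_csInf ((Gset_nonempty hQ.zero hr).image _) <| forall_mem_image.2 fun _ hg => by
      linarith [mul_sub_kinQint_le_integral_legendre hQ lam hg]
  linarith

/-- In the paper's notation `v ↦ (Q')⁻¹((λ - |v|²/2)₊)`. -/
def optimalDensity (Q : ℝ → ℝ) (lam : ℝ) (v : Space) : ℝ :=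
  legendreArgmax Q (lam - 1 / 2 * ‖v‖ ^ 2)

theorem half_norm_sq_mul_optimalDensity_add (hQ : QHyp Q Q') (lam : ℝ) (v : Space) :
    1 / 2 * ‖v‖ ^ 2 * optimalDensity Q lam v + Q (optimalDensity Q lam v) =
      lam * optimalDensity Q lam v - legendre Q (Ici 0) (lam - 1 / 2 * ‖v‖ ^ 2) := by
  have hmax := (legendreArgmax_mem hQ.continuousOn hQ.superlinear (lam - 1 / 2 * ‖v‖ ^ 2)).2
  rw [optimalDensity]
  linarith

theorem optimalDensity_mem_Gset (hQ : QHyp Q Q') (lam : ℝ) :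
    optimalDensity Q lam ∈ Gset Q (∫ v, optimalDensity Q lam v) := by
  have hint : Integrable (optimalDensity Q lam) :=
    integrable_comp_sub_half_norm_sq (legendreArgmax_mono hQ.continuousOn hQ.superlinear)
      (fun _ => legendreArgmax_eq_zero_of_nonpos hQ.continuousOn hQ.superlinear hQ.zero
        fun _ => hQ.nonneg) lam
  refine ⟨fun v => (legendreArgmax_mem hQ.continuousOn hQ.superlinear _).1, hint, ?_, rfl⟩
  simp_rw [half_norm_sq_mul_optimalDensity_add hQ lam]
  exact (hint.const_mul lam).sub (hQ.integrable_legendre lam)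

theorem kinQint_optimalDensity (hQ : QHyp Q Q') (lam : ℝ) :
    kinQint Q (optimalDensity Q lam) = lam * (∫ v, optimalDensity Q lam v) -
      ∫ v : Space, legendre Q (Ici 0) (lam - 1 / 2 * ‖v‖ ^ 2) := by
  simp_rw [kinQint, half_norm_sq_mul_optimalDensity_add hQ lam]
  rw [integral_sub ((optimalDensity_mem_Gset hQ lam).2.1.const_mul lam)
    (hQ.integrable_legendre lam), integral_const_mul]

theorem isGreatest_mul_sub_Phi (hQ : QHyp Q Q') (lam : ℝ) :
    IsGreatest ((fun r => lam * r - Phi Q r) '' Ici 0)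
      (∫ v : Space, legendre Q (Ici 0) (lam - 1 / 2 * ‖v‖ ^ 2)) := by
  have hmem := optimalDensity_mem_Gset hQ lam
  have hr₀ : 0 ≤ ∫ v, optimalDensity Q lam v := integral_nonneg hmem.1
  refine ⟨⟨_, hr₀, le_antisymm (mul_sub_Phi_le_integral_legendre hQ lam hr₀) ?_⟩,
    forall_mem_image.2 fun r hr => mul_sub_Phi_le_integral_legendre hQ lam hr⟩
  linarith [Phi_le_kinQint hQ hmem, kinQint_optimalDensity hQ lam]

end Reduction

/-- With `Q` and `Φ` extended by `+∞` on `(-∞,0)` (i.e. the Legendre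
suprema are taken over `[0,∞)`), one has `Φ*(λ) = ∫ Q*(λ - (1/2)|v|²) dv` for every
`λ ∈ ℝ`; in particular `Q*(λ) = 0 = Φ*(λ)` for `λ < 0`. -/
theorem legendre_Phi_eq (Q Q' : ℝ → ℝ) (hQ : QHyp Q Q') :
    (∀ lam : ℝ, legendre (Phi Q) (Set.Ici 0) lam =
      ∫ v : Space, legendre Q (Set.Ici 0) (lam - (1/2) * ‖v‖^2)) ∧
    (∀ lam : ℝ, lam < 0 →
      legendre Q (Set.Ici 0) lam = 0 ∧ legendre (Phi Q) (Set.Ici 0) lam = 0) := by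
  have hPhi : ∀ lam : ℝ, legendre (Phi Q) (Ici 0) lam =
      ∫ v : Space, legendre Q (Ici 0) (lam - 1 / 2 * ‖v‖ ^ 2) :=
    fun lam => (isGreatest_mul_sub_Phi hQ lam).csSup_eq
  have hQ_star : ∀ s ≤ 0, legendre Q (Ici 0) s = 0 :=
    fun _ => legendre_eq_zero_of_nonpos hQ.zero fun _ => hQ.nonneg
  refine ⟨hPhi, fun lam hlam => ⟨hQ_star lam hlam.le, ?_⟩⟩
  rw [hPhi]
  exact integral_eq_zero_of_ae <| ae_of_all _ fun v => hQ_star _ (by nlinarith [sq_nonneg ‖v‖])
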